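/- arXiv:2403.07640 — 2 statements merged into one kernel-verified Lean document; each statement's English description precedes it below -/
import Mathlib

section
/- If a finite directed graph G = (V,E) is (r+s−1)-robust with l hops with respect to a set F ⊆ V, where r ≥ 1 and s ≥ 1, then G is (r,s)-robust with l hops with respect to F. -/
/-!  Common definitions: multi-hop robustness notions for finite directed graphs,
following Yuan & Ishii, "Asynchronous Approximate Byzantine Consensus".

A directed graph on vertex type `V` is given by its edge relation `E : V → V → Prop`,
where `E j i` means `(j,i)` is an edge (node `i` can receive information from `j`). -/

/-- `p` is an at-most-`l`-hop path from `j` to `i`: a list of distinct vertices,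
consecutive ones joined by edges, starting at `j`, ending at `i`, with at least one
edge (length ≥ 2 as a vertex list) and at most `l` edges (length ≤ l+1). -/
def IsHopPath {V : Type*} (E : V → V → Prop) (l : ℕ) (j i : V) (p : List V) : Prop :=
  p.Nodup ∧ p.Chain' E ∧ p.head? = some j ∧ p.getLast? = some i ∧
    2 ≤ p.length ∧ p.length ≤ l + 1

/-- The intermediate nodes of a path: all vertices except the first and the last. -/
def interm {V : Type*} (p : List V) : List V := p.tail.dropLast

/-- Node `i` is in `Z^r_S` with respect to `F`: `i ∈ S` and there are `r` pairwise
independent paths of at most `l` hops, each starting outside `S` and ending at `i`,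
none of which has an intermediate node in `F`.  Independence means that two distinct
paths share no vertex other than `i`. -/
def MemZ {V : Type*} (E : V → V → Prop) (l : ℕ) (F S : Set V) (r : ℕ) (i : V) : Prop :=
  i ∈ S ∧ ∃ P : Fin r → List V,
    (∀ a, ∃ j, j ∉ S ∧ IsHopPath E l j i (P a)) ∧
    (∀ a, ∀ v ∈ interm (P a), v ∉ F) ∧
    (∀ a b, a ≠ b → ∀ v, v ∈ P a → v ∈ P b → v = i)

/-- The set `Z^r_S` with respect to `F`. -/
def ZSet {V : Type*} (E : V → V → Prop) (l : ℕ) (F S : Set V) (r : ℕ) : Set V :=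
  {i | MemZ E l F S r i}

/-- `(r,s)`-robustness with `l` hops with respect to `F`, where the nonempty disjoint
subsets range over subsets of a ground vertex set `W` (used for induced subgraphs). -/
def RSRobustOn {V : Type*} (E : V → V → Prop) (W : Set V) (l r s : ℕ) (F : Set V) : Prop :=
  ∀ V1 V2 : Set V, V1 ⊆ W → V2 ⊆ W → V1.Nonempty → V2.Nonempty → Disjoint V1 V2 →
    ZSet E l F V1 r = V1 ∨ ZSet E l F V2 r = V2 ∨
      s ≤ (ZSet E l F V1 r).ncard + (ZSet E l F V2 r).ncard

/-- `G = (V,E)` is `(r,s)`-robust with `l` hops with respect to `F`. -/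
def RSRobust {V : Type*} (E : V → V → Prop) (l r s : ℕ) (F : Set V) : Prop :=
  RSRobustOn E Set.univ l r s F

/-- The edge relation of the subgraph of `E` induced by the vertex set `W`. -/
def induced {V : Type*} (E : V → V → Prop) (W : Set V) : V → V → Prop :=
  fun j i => E j i ∧ j ∈ W ∧ i ∈ W

/-- `G` is `r`-strictly robust with `l` hops with respect to `F`: the subgraph of `G`
induced by `V ∖ F` is `r`-robust (i.e. `(r,1)`-robust) with `l` hops with respect to `F`. -/
def StrictRobust {V : Type*} (E : V → V → Prop) (l r : ℕ) (F : Set V) : Prop :=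
  RSRobustOn (induced E Fᶜ) Fᶜ l r 1 F

/-- `F` is an `f`-total set: it contains at most `f` nodes. -/
def FTotal {V : Type*} (f : ℕ) (F : Set V) : Prop := F.ncard ≤ f

/-- `F` is `f`-local (in `l`-hop neighbors): every node outside `F` has at most `f`
nodes of `F` among the nodes from which it is reachable by a path of at most `l` hops. -/
def FLocal {V : Type*} (E : V → V → Prop) (l f : ℕ) (F : Set V) : Prop :=
  ∀ i, i ∉ F → {j ∈ F | ∃ p, IsHopPath E l j i p}.ncard ≤ f

/-! If `Z^r_{V_k} ≠ V_k` for `k = 1, 2` and `|Z^r_{V_1}| + |Z^r_{V_2}| < s`, apply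
`(r+s-1)`-robustness to the nonempty disjoint sets `V_k \ Z^r_{V_k}`. A node with `r+s-1`
independent paths from outside `V_k \ Z^r_{V_k}` has distinct path sources, at most `s-1` of
which lie in `Z^r_{V_k}`; the remaining `r` paths start outside `V_k` and put the node into
`Z^r_{V_k}`, which it avoids. Hence both sets `Z^{r+s-1}_{V_k \ Z^r_{V_k}}` are empty,
contradicting robustness. -/

section

variable {V : Type*} {E : V → V → Prop} {l : ℕ} {F S : Set V}

lemma IsHopPath.head_mem {j i : V} {p : List V} (hp : IsHopPath E l j i p) : j ∈ p :=
  List.mem_of_mem_head? hp.2.2.1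

lemma zSet_subset (r : ℕ) : ZSet E l F S r ⊆ S := fun _ hi => hi.1

lemma MemZ.of_diff {Z : Set V} {r m : ℕ} {i : V} (hZ : Z.Finite) (hZm : Z.ncard ≤ m)
    (hi : MemZ E l F (S \ Z) (r + m) i) : MemZ E l F S r i := by
  classical
  obtain ⟨hiS, P, hsrc, hF, hind⟩ := hi
  choose j hjS hj using hsrc
  -- Two paths with a common source would meet at `i`, which lies inside `S \ Z`.
  have hj_inj : Function.Injective j := fun a b hab => by
    by_contra hne
    exact hjS a (hind a b hne _ (hj a).head_mem (hab ▸ (hj b).head_mem) ▸ hiS)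
  set A := Finset.univ.filter fun a => j a ∈ Z
  have hA : A.card ≤ m := by
    refine le_trans ?_ ((Set.ncard_eq_toFinset_card Z hZ).symm.le.trans hZm)
    exact Finset.card_le_card_of_injOn j (fun a ha => by simpa [A] using ha) hj_inj.injOn
  obtain ⟨e, he⟩ := Function.Embedding.exists_of_card_le_finset (α := Fin r) (s := Aᶜ)
    (by rw [Finset.card_compl, Fintype.card_fin, Fintype.card_fin]; omega)
  refine ⟨hiS.1, P ∘ e, fun k => ⟨j (e k), fun hjk => hjS (e k) ⟨hjk, ?_⟩, hj (e k)⟩,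
    fun k => hF (e k), fun a b hab => hind _ _ (e.injective.ne hab)⟩
  simpa [A] using he (Set.mem_range_self k)

lemma zSet_diff_zSet_eq_empty [Finite V] {r m : ℕ} (hm : (ZSet E l F S r).ncard ≤ m) :
    ZSet E l F (S \ ZSet E l F S r) (r + m) = ∅ :=
  Set.eq_empty_of_forall_notMem fun _ hi => hi.1.2 (hi.of_diff (Set.toFinite _) hm)

lemma diff_zSet_nonempty {r : ℕ} (h : ZSet E l F S r ≠ S) : (S \ ZSet E l F S r).Nonempty :=
  Set.sdiff_nonempty.2 fun hS => h ((zSet_subset r).antisymm hS)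

end

theorem robust_of_r_plus_s_general {V : Type*} [Fintype V] (E : V → V → Prop) (l r s : ℕ)
    (F : Set V)
    (h : RSRobust E l (r + s - 1) 1 F) :
    RSRobust E l r s F := by
  intro V1 V2 _ _ _ _ hdisj
  by_contra! hcon
  obtain ⟨hZ1, hZ2, hsum⟩ := hcon
  have hrs : r + s - 1 = r + (s - 1) := by omega
  have empty1 : ZSet E l F (V1 \ ZSet E l F V1 r) (r + s - 1) = ∅ :=
    hrs ▸ zSet_diff_zSet_eq_empty (by omega)
  have empty2 : ZSet E l F (V2 \ ZSet E l F V2 r) (r + s - 1) = ∅ :=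
    hrs ▸ zSet_diff_zSet_eq_empty (by omega)
  have ne1 := diff_zSet_nonempty hZ1
  have ne2 := diff_zSet_nonempty hZ2
  rcases h _ _ (Set.subset_univ _) (Set.subset_univ _) ne1 ne2
      (hdisj.mono Set.sdiff_subset Set.sdiff_subset) with h1 | h2 | h3
  · exact ne1.ne_empty (h1 ▸ empty1)
  · exact ne2.ne_empty (h2 ▸ empty2)
  · simp [empty1, empty2] at h3

/-- if `G` is `(r+s-1)`-robust with `l` hops w.r.t. `F` (with `r,s ≥ 1`),
then `G` is `(r,s)`-robust with `l` hops w.r.t. `F`. -/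
theorem robust_of_r_plus_s {V : Type*} [Fintype V] (E : V → V → Prop) (l r s : ℕ)
    (hl : 1 ≤ l) (hr : 1 ≤ r) (hs : 1 ≤ s) (F : Set V)
    (h : RSRobust E l (r + s - 1) 1 F) :
    RSRobust E l r s F :=
  robust_of_r_plus_s_general E l r s F h
end

section
/- There exists a finite directed graph G = (V,E) that is 2-strictly robust with 1 hop under the 1-local model but is not 3-robust with 1 hop (i.e., not (3,1)-robust with 1 hop with respect to F = ∅). (Hence condition (B) of Proposition 5 with f = 1, l = 1 does not imply condition (A).) -/
/-! The witness is the complete digraph on four vertices. A 1-local set `F` has at most one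
node, since every node outside `F` hears every node of `F`; so at least three nodes survive, and
of two disjoint nonempty sets of survivors one leaves at least two survivors outside itself, each
of which feeds every node of that set directly. On the other hand, splitting the four vertices
into two pairs leaves only two nodes outside each pair, too few for three independent 1-hop
paths. -/

section OneHop

variable {V : Type*} (E : V → V → Prop)

theorem isHopPath_one_iff (j i : V) (p : List V) :
    IsHopPath E 1 j i p ↔ p = [j, i] ∧ E j i ∧ j ≠ i := by
  constructor
  · rintro ⟨hnd, hch, hh, hl, h2, h3⟩
    obtain ⟨a, b, rfl⟩ := List.length_eq_two.mp (le_antisymm h3 h2)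
    obtain rfl : a = j := by simpa using hh
    obtain rfl : b = i := by simpa using hl
    exact ⟨rfl, List.isChain_pair.mp hch, by simpa using hnd⟩
  · rintro ⟨rfl, he, hne⟩
    exact ⟨by simp [hne], List.isChain_pair.mpr he, rfl, rfl, le_rfl, le_rfl⟩

theorem memZ_one_iff (F S : Set V) (r : ℕ) (i : V) :
    MemZ E 1 F S r i ↔ i ∈ S ∧ ∃ J : Fin r ↪ V, ∀ a, J a ∉ S ∧ E (J a) i := by
  constructor
  · rintro ⟨hi, P, hpath, -, hindep⟩
    choose J hJS hJ using hpath
    have hP a := (isHopPath_one_iff E (J a) i (P a)).1 (hJ a)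
    refine ⟨hi, ⟨J, fun a b hab => ?_⟩, fun a => ⟨hJS a, (hP a).2.1⟩⟩
    by_contra hne
    refine (hP a).2.2 (hindep a b hne (J a) ?_ ?_)
    · simp [(hP a).1]
    · simp [(hP b).1, hab]
  · rintro ⟨hi, J, hJ⟩
    have hne a : J a ≠ i := fun h => (hJ a).1 (h ▸ hi)
    refine ⟨hi, fun a => [J a, i],
      fun a => ⟨J a, (hJ a).1, (isHopPath_one_iff E _ _ _).2 ⟨rfl, (hJ a).2, hne a⟩⟩,
      fun a v hv => by simp [interm] at hv, ?_⟩
    intro a b hab v hva hvb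
    simp only [List.mem_cons, List.not_mem_nil, or_false] at hva hvb
    rcases hva with rfl | rfl
    · rcases hvb with h | rfl
      · exact absurd (J.injective h) hab
      · rfl
    · rfl

theorem zSet_one_eq_empty_of_ncard_compl_lt [Finite V] {F S : Set V} {r : ℕ}
    (hS : Sᶜ.ncard < r) : ZSet E 1 F S r = ∅ := by
  refine Set.eq_empty_of_forall_notMem fun i hi => ?_
  obtain ⟨-, J, hJ⟩ := (memZ_one_iff E F S r i).1 hi
  have : Nat.card (Fin r) ≤ Nat.card ↥(Sᶜ) :=
    Nat.card_le_card_of_injective (fun a => (⟨J a, (hJ a).1⟩ : ↥(Sᶜ)))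
      fun a b h => J.injective (congrArg Subtype.val h)
  rw [Nat.card_coe_set_eq, Nat.card_eq_fintype_card, Fintype.card_fin] at this
  omega

theorem not_rsRobust_one_of_ncard_compl_lt [Finite V] {F V1 V2 : Set V} {r s : ℕ}
    (hs : 0 < s) (h1 : V1.Nonempty) (h2 : V2.Nonempty) (hd : Disjoint V1 V2)
    (hc1 : V1ᶜ.ncard < r) (hc2 : V2ᶜ.ncard < r) : ¬ RSRobust E 1 r s F := by
  intro hrob
  have hz1 := zSet_one_eq_empty_of_ncard_compl_lt E (F := F) hc1
  have hz2 := zSet_one_eq_empty_of_ncard_compl_lt E (F := F) hc2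
  rcases hrob V1 V2 (Set.subset_univ _) (Set.subset_univ _) h1 h2 hd with h | h | h
  · exact h1.ne_empty (hz1 ▸ h).symm
  · exact h2.ne_empty (hz2 ▸ h).symm
  · simp [hz1, hz2] at h
    omega

end OneHop

section Complete

variable {V : Type*}

theorem zSet_induced_complete_eq_self [Finite V] {W S : Set V} (F : Set V) {r : ℕ}
    (hS : S ⊆ W) (hr : r ≤ (W \ S).ncard) : ZSet (induced (· ≠ ·) W) 1 F S r = S := by
  refine Set.Subset.antisymm (fun i hi => hi.1) fun i hi => ?_
  rw [← Nat.card_coe_set_eq] at hr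
  let J : Fin r ↪ V := (Fin.castLEEmb hr).trans
    ((Finite.equivFin ↥(W \ S)).symm.toEmbedding.trans (Function.Embedding.subtype _))
  have hJ a : J a ∈ W \ S := Subtype.coe_prop _
  refine (memZ_one_iff _ F S r i).2 ⟨hi, J, fun a => ⟨(hJ a).2, ?_, (hJ a).1, hS hi⟩⟩
  exact fun h => (hJ a).2 (h ▸ hi)

theorem ncard_le_of_fLocal_complete {F : Set V} {f : ℕ} (hF : FLocal (· ≠ ·) 1 f F) {i : V}
    (hi : i ∉ F) : F.ncard ≤ f := by
  have hsep : {j ∈ F | ∃ p, IsHopPath (· ≠ ·) 1 j i p} = F :=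
    Set.sep_eq_self_iff_mem_true.2 fun j hj =>
      have hji : j ≠ i := fun h => hi (h ▸ hj)
      ⟨[j, i], (isHopPath_one_iff _ j i _).2 ⟨rfl, hji, hji⟩⟩
  exact hsep ▸ hF i hi

/-- Of two disjoint subsets of the `m` survivors, one leaves at least `(m + 1) / 2` survivors
outside itself. -/
theorem strictRobust_complete_of_two_mul_le [Finite V] {F : Set V} {r : ℕ}
    (h : 2 * r ≤ Fᶜ.ncard + 1) : StrictRobust (· ≠ ·) 1 r F := by
  intro V1 V2 h1 h2 _ _ hd
  by_cases hc : r ≤ (Fᶜ \ V1).ncard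
  · exact Or.inl (zSet_induced_complete_eq_self F h1 hc)
  refine Or.inr (Or.inl (zSet_induced_complete_eq_self F h2 ?_))
  have c1 := Set.ncard_sdiff_add_ncard_of_subset h1
  have c2 : V1.ncard ≤ (Fᶜ \ V2).ncard :=
    Set.ncard_le_ncard fun v hv => ⟨h1 hv, hd.notMem_of_mem_left hv⟩
  omega

theorem strictRobust_complete_of_fLocal [Finite V] {F : Set V} {f r : ℕ}
    (hV : f + 2 * r ≤ Nat.card V + 1) (hF : FLocal (· ≠ ·) 1 f F) :
    StrictRobust (· ≠ ·) 1 r F := by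
  rcases Fᶜ.eq_empty_or_nonempty with hFc | ⟨i, hi⟩
  · intro V1 V2 h1 _ hV1
    simpa [hFc] using h1 hV1.some_mem
  apply strictRobust_complete_of_two_mul_le
  have := ncard_le_of_fLocal_complete hF hi
  have := Set.ncard_add_ncard_compl F
  omega

end Complete

/-- there is a finite digraph that is 2-strictly robust with 1 hop under
the 1-local model but not 3-robust with 1 hop (w.r.t. `F = ∅`). -/
theorem exists_B_not_A : ∃ (n : ℕ) (E : Fin n → Fin n → Prop),
    (∀ F : Set (Fin n), FLocal E 1 1 F → StrictRobust E 1 2 F) ∧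
    ¬ RSRobust E 1 3 1 (∅ : Set (Fin n)) := by
  refine ⟨4, (· ≠ ·), fun F hF => strictRobust_complete_of_fLocal (by simp) hF, ?_⟩
  refine not_rsRobust_one_of_ncard_compl_lt _ one_pos (V1 := {0, 1}) (V2 := {2, 3})
    ⟨0, by simp⟩ ⟨2, by simp⟩ ?_ ?_ ?_
  · simp [Set.disjoint_left]
  all_goals rw [Set.ncard_eq_toFinset_card']; decide
end
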